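/- Let n ≥ 2. For every integer k ≥ 1 and all z ∈ ℂⁿ, Z̃₁^* φ_k^{n−1}(z) = −(1/2) z₁ φ_{k−1}^{n}(z), and Z̃₁^* φ_0^{n−1} ≡ 0; moreover for every integer k ≥ 0 and all z ∈ ℂⁿ, Z̃₂ φ_k^{n−1}(z) = −(1/2) \overline{z_2} φ_k^{n}(z). -/

import Mathlib

open MeasureTheory Complex Finset Metric

noncomputable section

/-- `ℂⁿ` as a Euclidean space. -/
abbrev Cn (n : ℕ) := EuclideanSpace ℂ (Fin n)

instance (n : ℕ) : MeasurableSpace (Cn n) := WithLp.measurableSpace 2 (Fin n → ℂ)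
instance (n : ℕ) : BorelSpace (Cn n) := PiLp.borelSpace 2
instance (n : ℕ) : MeasureSpace (Cn n) :=
  { volume := Measure.map (WithLp.toLp 2) (volume : Measure (Fin n → ℂ)) }

/-- The Laguerre polynomial of degree `k` and order `α`:
`L_k^α(x) = Σ_{i=0}^k (−1)^i ((α+k)!/((k−i)!(α+i)! i!)) x^i`. -/
def laguerreL (k α : ℕ) (x : ℝ) : ℝ :=
  ∑ i ∈ Finset.range (k + 1),
    (-1 : ℝ) ^ i * ((α + k).factorial : ℝ) /
      (((k - i).factorial : ℝ) * ((α + i).factorial : ℝ) * (i.factorial : ℝ)) * x ^ i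

/-- The Laguerre function `φ_k^ν(z) = L_k^ν(|z|²/2) e^{−|z|²/4}` on `ℂⁿ`. -/
def phiFn (n k ν : ℕ) (z : Cn n) : ℂ :=
  ((laguerreL k ν (‖z‖ ^ 2 / 2) * Real.exp (-‖z‖ ^ 2 / 4) : ℝ) : ℂ)

/-- The radial profile `φ_k^ν(r) = L_k^ν(r²/2) e^{−r²/4}`. -/
def phiRad (k ν : ℕ) (r : ℝ) : ℝ :=
  laguerreL k ν (r ^ 2 / 2) * Real.exp (-r ^ 2 / 4)

/-- Directional derivative `∂/∂x_j`. -/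
def pdx (n : ℕ) (j : Fin n) (f : Cn n → ℂ) (z : Cn n) : ℂ :=
  fderiv ℝ f z (EuclideanSpace.single j 1)

/-- Directional derivative `∂/∂y_j`. -/
def pdy (n : ℕ) (j : Fin n) (f : Cn n → ℂ) (z : Cn n) : ℂ :=
  fderiv ℝ f z (EuclideanSpace.single j Complex.I)

/-- The operator `Z̃_j = ∂/∂z_j − (1/4) z̄_j`, where
`∂/∂z_j = (1/2)(∂/∂x_j − i ∂/∂y_j)`. -/
def Zt (n : ℕ) (j : Fin n) (f : Cn n → ℂ) : Cn n → ℂ := fun z =>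
  (1 / 2 : ℂ) * (pdx n j f z - Complex.I * pdy n j f z) -
    (1 / 4 : ℂ) * (starRingEnd ℂ) (z j) * f z

/-- The operator `Z̃_j^* = ∂/∂z̄_j + (1/4) z_j`, where
`∂/∂z̄_j = (1/2)(∂/∂x_j + i ∂/∂y_j)`. -/
def ZtStar (n : ℕ) (j : Fin n) (f : Cn n → ℂ) : Cn n → ℂ := fun z =>
  (1 / 2 : ℂ) * (pdx n j f z + Complex.I * pdy n j f z) +
    (1 / 4 : ℂ) * z j * f z

/-- The polynomial `P(z) = Σ_{|α|=p, |β|=q} c_{αβ} z^α z̄^β` on `ℂⁿ`. -/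
def bigraded (n p q : ℕ) (c : (Fin n → ℕ) → (Fin n → ℕ) → ℂ) (z : Cn n) : ℂ :=
  ∑ α ∈ Finset.Nat.antidiagonalTuple n p, ∑ β ∈ Finset.Nat.antidiagonalTuple n q,
    c α β * (∏ j, z j ^ α j) * (∏ j, (starRingEnd ℂ) (z j) ^ β j)

/-- The Laplacian on `ℝ^{2n} ≅ ℂⁿ`. -/
def lap (n : ℕ) (f : Cn n → ℂ) (z : Cn n) : ℂ :=
  ∑ j : Fin n,
    (fderiv ℝ (fun w => fderiv ℝ f w (EuclideanSpace.single j 1)) z (EuclideanSpace.single j 1) +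
      fderiv ℝ (fun w => fderiv ℝ f w (EuclideanSpace.single j Complex.I)) z
        (EuclideanSpace.single j Complex.I))

/-- The twisted convolution `f × g(z) = ∫ f(z−w) g(w) e^{(i/2) Im(z·w̄)} dw`. -/
def twConv (n : ℕ) (f g : Cn n → ℂ) (z : Cn n) : ℂ :=
  ∫ w : Cn n,
    f (z - w) * g w *
      Complex.exp (Complex.I / 2 * (((∑ j, z j * (starRingEnd ℂ) (w j)).im : ℝ) : ℂ))

/-- The normalized surface measure `μ_r` on the sphere of radius `r` centered at the
origin, realized as the pushforward of the normalized surface measure of the unit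
sphere under scaling by `r`. -/
def muSph (n : ℕ) (r : ℝ) : Measure (Cn n) :=
  ((volume : Measure (Cn n)).toSphere Set.univ)⁻¹ •
    Measure.map (fun ω : sphere (0 : Cn n) 1 => r • (ω : Cn n))
      (volume : Measure (Cn n)).toSphere

/-- The weighted twisted spherical mean
`f × gμ_r(z) = ∫_{S_r(o)} f(z−w) g(w) e^{(i/2) Im(z·w̄)} dμ_r(w)`. -/
def twSphMean (n : ℕ) (f g : Cn n → ℂ) (r : ℝ) (z : Cn n) : ℂ :=
  ∫ w,
    f (z - w) * g w *
      Complex.exp (Complex.I / 2 * (((∑ j, z j * (starRingEnd ℂ) (w j)).im : ℝ) : ℂ))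
      ∂(muSph n r)

/-- The twisted spherical mean `f × μ_r(z) = ∫_{S_r(o)} f(z−w) e^{(i/2) Im(z·w̄)} dμ_r(w)`. -/
def tsMean (n : ℕ) (f : Cn n → ℂ) (r : ℝ) (z : Cn n) : ℂ :=
  ∫ w,
    f (z - w) *
      Complex.exp (Complex.I / 2 * (((∑ j, z j * (starRingEnd ℂ) (w j)).im : ℝ) : ℂ))
      ∂(muSph n r)

/-- Ordered product of iterated operators: `(T_1)^{α_1} ∘ ⋯ ∘ (T_n)^{α_n}`. -/
def multiOp (n : ℕ) (T : Fin n → (Cn n → ℂ) → Cn n → ℂ) (α : Fin n → ℕ) :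
    (Cn n → ℂ) → Cn n → ℂ :=
  (List.ofFn fun j : Fin n => (T j)^[α j]).foldr (· ∘ ·) id

/-- The operator `P(A) = Σ c_{αβ} (A^*)^α A^β` attached to a bigraded polynomial. -/
def polyOp (n p q : ℕ) (c : (Fin n → ℕ) → (Fin n → ℕ) → ℂ)
    (Astar A : Fin n → (Cn n → ℂ) → Cn n → ℂ) (f : Cn n → ℂ) (z : Cn n) : ℂ :=
  ∑ α ∈ Finset.Nat.antidiagonalTuple n p, ∑ β ∈ Finset.Nat.antidiagonalTuple n q,
    c α β * multiOp n Astar α (multiOp n A β f) z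

/-! For a radial function `f(z) = G(|z|²)` one has `∂f/∂z̄_j = G'(|z|²) z_j` and
`∂f/∂z_j = G'(|z|²) z̄_j`, so `Z̃_j^* f = (G' + G/4) z_j` and `Z̃_j f = (G' − G/4) z̄_j`.
For `G(s) = L_k^ν(s/2) e^{−s/4}` the Laguerre identities `(L_k^ν)' = −L_{k−1}^{ν+1}` and
`L_k^{ν+1} − L_{k−1}^{ν+1} = L_k^ν` turn these into the stated formulas. -/

lemma laguerreL_zero_left (α : ℕ) (x : ℝ) : laguerreL 0 α x = 1 := by
  simp [laguerreL, Nat.factorial_ne_zero]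

lemma laguerreL_succ_sub_laguerreL (k α : ℕ) (x : ℝ) :
    laguerreL (k + 1) (α + 1) x - laguerreL k (α + 1) x = laguerreL (k + 1) α x := by
  unfold laguerreL
  rw [Finset.sum_range_succ _ (k + 1), Finset.sum_range_succ _ (k + 1), add_sub_right_comm,
    ← Finset.sum_sub_distrib]
  congr 1
  · refine Finset.sum_congr rfl fun i hi => ?_
    obtain ⟨c, rfl⟩ : ∃ c, k = i + c := ⟨k - i, by grind⟩
    rw [show i + c - i = c by omega, show i + c + 1 - i = c + 1 by omega,
      show α + 1 + (i + c + 1) = α + 1 + (i + c) + 1 by omega,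
      show α + (i + c + 1) = α + 1 + (i + c) by omega, show α + 1 + i = α + i + 1 by omega,
      Nat.factorial_succ (α + 1 + (i + c)), Nat.factorial_succ c, Nat.factorial_succ (α + i)]
    push_cast
    field_simp
    ring
  · rw [Nat.sub_self, show α + 1 + (k + 1) = α + (k + 1) + 1 by omega,
      Nat.factorial_succ (α + (k + 1))]
    push_cast
    field_simp

lemma hasDerivAt_laguerreL_succ (k α : ℕ) (x : ℝ) :
    HasDerivAt (laguerreL (k + 1) α) (-laguerreL k (α + 1) x) x := by
  have h : HasDerivAt (laguerreL (k + 1) α)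
      (∑ i ∈ Finset.range (k + 2),
        (-1 : ℝ) ^ i * ((α + (k + 1)).factorial : ℝ) /
          (((k + 1 - i).factorial : ℝ) * ((α + i).factorial : ℝ) * (i.factorial : ℝ)) *
          (i * x ^ (i - 1))) x := by
    unfold laguerreL
    exact HasDerivAt.fun_sum fun i _ => (hasDerivAt_pow i x).const_mul _
  convert h using 1
  rw [Finset.sum_range_succ' _ (k + 1), Nat.cast_zero, zero_mul, mul_zero, add_zero, laguerreL,
    ← Finset.sum_neg_distrib]
  refine Finset.sum_congr rfl fun i hi => ?_
  obtain ⟨c, rfl⟩ : ∃ c, k = i + c := ⟨k - i, by grind⟩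
  rw [show i + c - i = c by omega, show i + c + 1 - (i + 1) = c by omega,
    show α + (i + c + 1) = α + 1 + (i + c) by omega, show α + (i + 1) = α + i + 1 by omega,
    show α + 1 + i = α + i + 1 by omega, Nat.add_sub_cancel, pow_succ,
    Nat.factorial_succ (α + i), Nat.factorial_succ i]
  push_cast
  field_simp

-- `L_k^α' = −L_{k−1}^{α+1}`, rewritten so that it needs no case split on `k`.
lemma hasDerivAt_laguerreL (k α : ℕ) (x : ℝ) :
    HasDerivAt (laguerreL k α) (laguerreL k α x - laguerreL k (α + 1) x) x := by
  cases k with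
  | zero =>
    simp only [laguerreL_zero_left, sub_self]
    exact hasDerivAt_const x (1 : ℝ) |>.congr_of_eventuallyEq
      (Filter.Eventually.of_forall fun y => laguerreL_zero_left α y)
  | succ k =>
    rw [← laguerreL_succ_sub_laguerreL k α x, sub_sub_cancel_left]
    exact hasDerivAt_laguerreL_succ k α x

lemma fderiv_comp_normSq_apply (n : ℕ) {G : ℝ → ℝ} {G' : ℝ} (z : Cn n)
    (hG : HasDerivAt G G' (‖z‖ ^ 2)) (v : Cn n) :
    fderiv ℝ (fun w : Cn n => (G (‖w‖ ^ 2) : ℂ)) z v = ((2 * G' * inner ℝ z v : ℝ) : ℂ) := by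
  have h : HasFDerivAt (fun w : Cn n => (G (‖w‖ ^ 2) : ℂ))
      (Complex.ofRealCLM.comp (G' • 2 • innerSL ℝ z)) z :=
    Complex.ofRealCLM.hasFDerivAt.comp z
      (hG.comp_hasFDerivAt z (hasStrictFDerivAt_norm_sq z).hasFDerivAt)
  rw [h.fderiv]
  simp only [ContinuousLinearMap.comp_apply, smul_apply, innerSL_apply_apply,
    ofRealCLM_apply, smul_eq_mul, nsmul_eq_mul]
  push_cast
  ring

lemma inner_single_one (n : ℕ) (z : Cn n) (j : Fin n) :
    inner ℝ z (EuclideanSpace.single j (1 : ℂ)) = (z j).re := by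
  simp [PiLp.inner_apply, apply_ite]

lemma inner_single_I (n : ℕ) (z : Cn n) (j : Fin n) :
    inner ℝ z (EuclideanSpace.single j I) = (z j).im := by
  simp [PiLp.inner_apply, apply_ite]

lemma ZtStar_comp_normSq (n : ℕ) (j : Fin n) {G : ℝ → ℝ} {G' : ℝ} (z : Cn n)
    (hG : HasDerivAt G G' (‖z‖ ^ 2)) :
    ZtStar n j (fun w => (G (‖w‖ ^ 2) : ℂ)) z = ((G' + G (‖z‖ ^ 2) / 4 : ℝ) : ℂ) * z j := by
  rw [ZtStar, pdx, pdy, fderiv_comp_normSq_apply n z hG, fderiv_comp_normSq_apply n z hG,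
    inner_single_one, inner_single_I]
  push_cast
  linear_combination (G' : ℂ) * re_add_im (z j)

lemma Zt_comp_normSq (n : ℕ) (j : Fin n) {G : ℝ → ℝ} {G' : ℝ} (z : Cn n)
    (hG : HasDerivAt G G' (‖z‖ ^ 2)) :
    Zt n j (fun w => (G (‖w‖ ^ 2) : ℂ)) z =
      ((G' - G (‖z‖ ^ 2) / 4 : ℝ) : ℂ) * starRingEnd ℂ (z j) := by
  rw [Zt, pdx, pdy, fderiv_comp_normSq_apply n z hG, fderiv_comp_normSq_apply n z hG,
    inner_single_one, inner_single_I]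
  push_cast
  linear_combination (G' : ℂ) * (RCLike.conj_eq_re_sub_im (z j)).symm

lemma hasDerivAt_laguerreL_mul_exp (k ν : ℕ) (s : ℝ) :
    HasDerivAt (fun s => laguerreL k ν (s / 2) * Real.exp (-s / 4))
      ((laguerreL k ν (s / 2) - laguerreL k (ν + 1) (s / 2)) / 2 * Real.exp (-s / 4) -
        laguerreL k ν (s / 2) * Real.exp (-s / 4) / 4) s := by
  have hL : HasDerivAt (fun s => laguerreL k ν (s / 2))
      ((laguerreL k ν (s / 2) - laguerreL k (ν + 1) (s / 2)) * (1 / 2)) s :=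
    ((hasDerivAt_laguerreL k ν (s / 2)).comp s ((hasDerivAt_id' s).div_const 2) :)
  have hE : HasDerivAt (fun s => Real.exp (-s / 4)) (Real.exp (-s / 4) * (-1 / 4)) s :=
    ((hasDerivAt_id' s).neg.div_const 4).exp
  exact (hL.fun_mul hE).congr_deriv (by ring)

lemma ZtStar_phiFn (n : ℕ) (j : Fin n) (k ν : ℕ) (z : Cn n) :
    ZtStar n j (phiFn n k ν) z = (1 / 2 : ℂ) * z j * (phiFn n k ν z - phiFn n k (ν + 1) z) := by
  refine (ZtStar_comp_normSq n j z (hasDerivAt_laguerreL_mul_exp k ν _)).trans ?_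
  simp only [phiFn]
  push_cast
  ring

lemma Zt_phiFn (n : ℕ) (j : Fin n) (k ν : ℕ) (z : Cn n) :
    Zt n j (phiFn n k ν) z = -(1 / 2 : ℂ) * starRingEnd ℂ (z j) * phiFn n k (ν + 1) z := by
  refine (Zt_comp_normSq n j z (hasDerivAt_laguerreL_mul_exp k ν _)).trans ?_
  simp only [phiFn]
  push_cast
  ring

lemma phiFn_succ_sub_phiFn_succ (n k ν : ℕ) (z : Cn n) :
    phiFn n (k + 1) ν z - phiFn n (k + 1) (ν + 1) z = -phiFn n k (ν + 1) z := by
  simp only [phiFn, ← laguerreL_succ_sub_laguerreL k ν]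
  push_cast
  ring

lemma phiFn_zero_left (n ν : ℕ) (z : Cn n) :
    phiFn n 0 ν z = ((Real.exp (-‖z‖ ^ 2 / 4) : ℝ) : ℂ) := by
  rw [phiFn, laguerreL_zero_left, one_mul]

theorem stmt0 (n : ℕ) (hn : 2 ≤ n) :
    (∀ k : ℕ, 1 ≤ k → ∀ z : Cn n,
        ZtStar n ⟨0, by omega⟩ (phiFn n k (n - 1)) z =
          -(1 / 2 : ℂ) * z ⟨0, by omega⟩ * phiFn n (k - 1) n z) ∧
    (∀ z : Cn n, ZtStar n ⟨0, by omega⟩ (phiFn n 0 (n - 1)) z = 0) ∧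
    (∀ k : ℕ, ∀ z : Cn n,
        Zt n ⟨1, by omega⟩ (phiFn n k (n - 1)) z =
          -(1 / 2 : ℂ) * (starRingEnd ℂ) (z ⟨1, by omega⟩) * phiFn n k n z) := by
  obtain ⟨ν, rfl⟩ : ∃ ν, n = ν + 1 := ⟨n - 1, by omega⟩
  simp only [Nat.add_sub_cancel]
  refine ⟨?_, fun z => ?_, fun k z => Zt_phiFn _ _ k ν z⟩
  · rintro (_ | k) hk z
    · omega
    rw [ZtStar_phiFn, phiFn_succ_sub_phiFn_succ, Nat.add_sub_cancel]
    ring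
  · rw [ZtStar_phiFn, phiFn_zero_left, phiFn_zero_left, sub_self, mul_zero]
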